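/- arXiv:1704.01836 — 3 statements merged into one kernel-verified Lean document; each statement's English description precedes it below -/
import Mathlib

section
/- If there exists a homomorphism f from a pure k-dimensional simplicial complex X to a pure k-dimensional simplicial complex X', then ϑ_k(complement of X) ≤ ϑ_k(complement of X'). In particular, if there is a homomorphism from X to the complete k-complex K_ℓ^k, then ϑ_k(complement of X) ≤ ℓ. -/
open Finset Matrix

/-- The oriented incidence number `[F:K]` induced by the global linear order on
the vertices: it is `(-1)^j` if `K ⊆ F`, `F ∖ K = {x_j}` and `x_j` is the `j`-th
smallest element of `F`, and `0` otherwise. -/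
def inc {V : Type} [DecidableEq V] [LinearOrder V] (F K : Finset V) : ℝ :=
  if K ⊆ F ∧ F.card = K.card + 1 then
    ∑ x ∈ F \ K, (-1 : ℝ) ^ (K.filter (fun y => y < x)).card
  else 0

/-- An abstract simplicial complex on a vertex type `V`: a family of finite subsets
of `V` closed under taking subsets. -/
structure SC (V : Type) [DecidableEq V] where
  faces : Finset (Finset V)
  down_closed : ∀ ⦃F⦄, F ∈ faces → ∀ ⦃K : Finset V⦄, K ⊆ F → K ∈ faces

variable {V : Type} [Fintype V] [DecidableEq V] [LinearOrder V]

/-- The faces of cardinality `m` (i.e. of dimension `m-1`) of a complex. -/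
def SC.dfaces (X : SC V) (m : ℕ) : Finset (Finset V) := X.faces.filter fun F => F.card = m

/-- The faces of cardinality `m`, as a type (index set of the space `C^{m-1}` of
`(m-1)`-dimensional cochains). -/
abbrev Face (X : SC V) (m : ℕ) := {F : Finset V // F ∈ X.dfaces m}

/-- The matrix of the coboundary map `δ_{m-1}` from `(m-1)`-dimensional cochains
(functions on cardinality-`m` faces) to `m`-dimensional cochains, in the bases of
elementary cochains. -/
def deltaMat (X : SC V) (m : ℕ) : Matrix (Face X (m + 1)) (Face X m) ℝ :=
  fun H F => inc H.1 F.1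

/-- The up-Laplacian `L↑_{m-1} = ∂_m δ_{m-1}` acting on `(m-1)`-dimensional cochains,
where `∂ = δ*` is the adjoint (transpose) of the coboundary map. -/
def Lup (X : SC V) (m : ℕ) : Matrix (Face X m) (Face X m) ℝ :=
  (deltaMat X m)ᵀ * deltaMat X m

/-- The down-Laplacian `L↓_m = δ_{m-1} ∂_m` acting on `m`-dimensional cochains. -/
def Ldown (X : SC V) (m : ℕ) : Matrix (Face X (m + 1)) (Face X (m + 1)) ℝ :=
  deltaMat X m * (deltaMat X m)ᵀ

/-- The space of harmonicSp `i`-cochains `H_i = Z_i ∩ Z^i = ker ∂_i ∩ ker δ_i`. -/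
def harmonicSp (X : SC V) (i : ℕ) : Submodule ℝ (Face X (i + 1) → ℝ) :=
  LinearMap.ker (Matrix.mulVecLin (deltaMat X i)ᵀ) ⊓
    LinearMap.ker (Matrix.mulVecLin (deltaMat X (i + 1)))

/-- The type of all `k`-element subsets of `V`. -/
abbrev KSet (V : Type) [Fintype V] [DecidableEq V] (k : ℕ) := {F : Finset V // F.card = k}

/-- `ε_{F,F'} = [F : F ∩ F'] ⬝ [F' : F ∩ F']`. -/
def eps {V : Type} [DecidableEq V] [LinearOrder V] (F F' : Finset V) : ℝ :=
  inc F (F ∩ F') * inc F' (F ∩ F')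

/-- The down-Laplacian `L↓_{k-1}` of the complete complex `K_n^k`, as a matrix indexed
by all `k`-subsets of the vertex set: diagonal entries `k`, off-diagonal entries
`ε_{F,F'}` (which vanish unless `|F ∩ F'| = k-1`). -/
def Lc (V : Type) [Fintype V] [DecidableEq V] [LinearOrder V] (k : ℕ) :
    Matrix (KSet V k) (KSet V k) ℝ :=
  fun F F' => if F = F' then (k : ℝ) else eps F.1 F'.1

/-- `S` is an independent set of the pure `k`-dimensional complex `X`: it contains
no `k`-dimensional face of `X`. -/
def SC.IsIndep (X : SC V) (k : ℕ) (S : Finset V) : Prop :=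
  ∀ H ∈ X.dfaces (k + 1), ¬ H ⊆ S

/-- The independence number `α(X)` of a pure `k`-dimensional complex. -/
noncomputable def alphaNum (X : SC V) (k : ℕ) : ℕ :=
  sSup {m | ∃ S : Finset V, X.IsIndep k S ∧ S.card = m}

/-- `X` is a pure `k`-dimensional simplicial complex: all faces have dimension at
most `k` and every face is contained in a face of dimension `k`. -/
def SC.Pure (X : SC V) (k : ℕ) : Prop :=
  (∀ F ∈ X.faces, F.card ≤ k + 1) ∧ ∀ F ∈ X.faces, ∃ H ∈ X.dfaces (k + 1), F ⊆ H

/-- Feasibility for the primal semidefinite program defining `ϑ_k(X)`. -/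
def thetaFeasible (X : SC V) (k : ℕ) (Y : Matrix (KSet V k) (KSet V k) ℝ) : Prop :=
  Y.PosSemidef ∧ Matrix.trace Y = 1 ∧
  (∀ F F' : KSet V k, F.1 ∪ F'.1 ∈ X.dfaces (k + 1) → Y F F' = 0) ∧
  (∀ F F' : KSet V k, k + 2 ≤ (F.1 ∪ F'.1).card → Y F F' = 0) ∧
  (∀ F F' G G' : KSet V k, F.1 ∪ F'.1 = G.1 ∪ G'.1 →
    eps F.1 F'.1 * Y F F' = eps G.1 G'.1 * Y G G')

/-- The theta number `ϑ_k(X)` of a pure `k`-dimensional simplicial complex: the optimal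
value of the semidefinite program maximizing `⟨L↓_{k-1}, Y⟩` over feasible `Y`. -/
noncomputable def theta (X : SC V) (k : ℕ) : ℝ :=
  sSup {t | ∃ Y, thetaFeasible X k Y ∧ Matrix.trace (Lc V k * Y) = t}

/-- The complete `k`-dimensional complex on the vertex type `V`: all subsets of
cardinality at most `k+1` are faces. -/
def completeComplex (V : Type) [Fintype V] [DecidableEq V] (k : ℕ) : SC V :=
  ⟨univ.filter fun F => F.card ≤ k + 1, by
    intro F hF K hK
    simp only [mem_filter, mem_univ, true_and] at hF ⊢
    exact le_trans (card_le_card hK) hF⟩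

/-- The empty complex (no faces at all), conventionally pure of any dimension. -/
def emptyComplex (V : Type) [DecidableEq V] : SC V :=
  ⟨∅, by intro F hF; simp at hF⟩

/-- The largest eigenvalue of a matrix. -/
noncomputable def lambdaMax {ι : Type} [Fintype ι] (M : Matrix ι ι ℝ) : ℝ :=
  sSup {μ : ℝ | Module.End.HasEigenvalue (Matrix.mulVecLin M) μ}

/-- The smallest eigenvalue of a matrix. -/
noncomputable def lambdaMin {ι : Type} [Fintype ι] (M : Matrix ι ι ℝ) : ℝ :=
  sInf {μ : ℝ | Module.End.HasEigenvalue (Matrix.mulVecLin M) μ}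

/-- The degree of a face `F`: the number of faces of one higher dimension containing it. -/
def SC.deg (X : SC V) (F : Finset V) : ℕ :=
  ((X.dfaces (F.card + 1)).filter fun H => F ⊆ H).card

/-- The minimal degree of a `(k-1)`-dimensional face (a face of cardinality `k`). -/
noncomputable def degMin (X : SC V) (k : ℕ) : ℕ :=
  sInf {m | ∃ F ∈ X.dfaces k, m = X.deg F}

/-- The up-Laplacian `L↑_{k-1}(X)` extended by zeros to a matrix indexed by all
`k`-subsets of the vertex set. -/
def LupE (X : SC V) (k : ℕ) : Matrix (KSet V k) (KSet V k) ℝ :=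
  fun F F' => ∑ H ∈ X.dfaces (k + 1), inc H F.1 * inc H F'.1

/-- The down-Laplacian `L↓_{k-1}(X)` extended by zeros to a matrix indexed by all
`k`-subsets of the vertex set. -/
def LdownE (X : SC V) (k : ℕ) : Matrix (KSet V k) (KSet V k) ℝ :=
  fun F F' =>
    if F.1 ∈ X.faces ∧ F'.1 ∈ X.faces then ∑ K ∈ X.dfaces (k - 1), inc F.1 K * inc F'.1 K
    else 0

/-- The Lovász theta number of a graph given by an adjacency relation `adj` on a finite
vertex type, in its primal formulation. -/
noncomputable def thetaG {W : Type} [Fintype W] (adj : W → W → Prop) : ℝ :=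
  sSup {t | ∃ Z : Matrix W W ℝ, Z.PosSemidef ∧ Matrix.trace Z = 1 ∧
    (∀ v w, adj v w → Z v w = 0) ∧ t = ∑ v, ∑ w, Z v w}

/-- The complement of a pure `k`-dimensional complex: the pure `k`-dimensional complex
whose `k`-dimensional faces are the `(k+1)`-subsets of `V` that are not faces of `X`. -/
def SC.compl (X : SC V) (k : ℕ) : SC V :=
  ⟨univ.filter fun F => F.card ≤ k + 1 ∧ (F.card = k + 1 → F ∉ X.faces), by
    intro F hF K hK
    simp only [mem_filter, mem_univ, true_and] at hF ⊢
    refine ⟨le_trans (card_le_card hK) hF.1, fun hKc => ?_⟩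
    have h1 : K.card ≤ F.card := card_le_card hK
    have hKF : K = F := Finset.eq_of_subset_of_card_le hK (by omega)
    rw [hKF]; exact hF.2 (by omega)⟩

/-- A homomorphism between pure `k`-dimensional simplicial complexes `X` and `X'`: a map
`f : X_{k-1} → X'_{k-1}` such that, for suitable orientations of `X` and `X'` (encoded by
sign functions on the faces, modifying the incidence numbers induced by the vertex
orders), every `k`-face `H` of `X` has a `k`-face `H'` of `X'` whose `(k-1)`-faces are
exactly the images of the `(k-1)`-faces of `H`, with matching oriented incidence
numbers. -/
def IsHom {V W : Type} [Fintype V] [DecidableEq V] [LinearOrder V]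
    [Fintype W] [DecidableEq W] [LinearOrder W]
    (X : SC V) (X' : SC W) (k : ℕ) (f : Finset V → Finset W) : Prop :=
  (∀ F ∈ X.dfaces k, f F ∈ X'.dfaces k) ∧
  ∃ s : Finset V → ℝ, ∃ s' : Finset W → ℝ,
    (∀ F, s F = 1 ∨ s F = -1) ∧ (∀ F, s' F = 1 ∨ s' F = -1) ∧
    ∀ H ∈ X.dfaces (k + 1), ∃ H' ∈ X'.dfaces (k + 1),
      ((X.dfaces k).filter (fun F => F ⊆ H)).image f =
        (X'.dfaces k).filter (fun F' => F' ⊆ H') ∧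
      ∀ F ∈ X.dfaces k, F ⊆ H →
        s' H' * s' (f F) * inc H' (f F) = s H * s F * inc H F

/-!
A feasible `Y` for `ϑ_k(X̄)` vanishes off the diagonal except on pairs of `(k-1)`-faces spanning a
`k`-face of `X`. On the boundary of each `k`-face `H`, a homomorphism `f` is a bijection onto the
boundary of a `k`-face `H'` of `X'` which, after the orientation signs `σ`, preserves
`ε_{F,G} = -[H:F][H:G]`. The signed pushforward `Pᵀ Y P`, with `P F A = σ F` if `f F = A`, is
therefore positive semidefinite with the same trace and the same `ε`-weighted off-diagonal mass,
supported on pairs spanning faces of `X'`; it is `ε`-symmetric because every `k`-face `H` meets each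
pair `(A, B)` with `A ∪ B = H'` in exactly one pair of its own faces. So it is feasible for
`ϑ_k(X̄')` with the same objective. The bound `ℓ` holds since `L↓` of the complete complex on `n`
vertices is `n·I - δᵀδ ≤ n·I`.
-/

lemma bijOn_of_image_eq {α β : Type} [DecidableEq β] {f : α → β} {s : Finset α} {t : Finset β}
    (himg : s.image f = t) (hcard : #s = #t) : Set.BijOn f s t := by
  rw [← himg, coe_image]
  exact (injOn_of_card_image_eq (himg ▸ hcard.symm)).bijOn_image

section FinsetCard

variable {α : Type} [DecidableEq α]

lemma succ_le_card_union {k : ℕ} {F G : Finset α} (hF : #F = k) (hG : #G = k) (hne : F ≠ G) :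
    k + 1 ≤ #(F ∪ G) := by
  by_contra! h
  exact hne <| (eq_of_subset_of_card_le subset_union_left (by omega)).trans
    (eq_of_subset_of_card_le subset_union_right (by omega)).symm

lemma union_eq_of_mem_powersetCard {k : ℕ} {H F G : Finset α} (hH : #H = k + 1)
    (hF : F ∈ H.powersetCard k) (hG : G ∈ H.powersetCard k) (hne : F ≠ G) : F ∪ G = H := by
  rw [mem_powersetCard] at hF hG
  exact eq_of_subset_of_card_le (union_subset hF.1 hG.1)
    (hH ▸ succ_le_card_union hF.2 hG.2 hne)

end FinsetCard

section Incidence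

variable {α : Type} [DecidableEq α] [LinearOrder α]

lemma inc_eq_zero {F K : Finset α} (h : ¬(K ⊆ F ∧ #F = #K + 1)) : inc F K = 0 :=
  if_neg h

lemma inc_insert {K : Finset α} {a : α} (ha : a ∉ K) :
    inc (insert a K) K = (-1) ^ #{y ∈ K | y < a} := by
  rw [inc, if_pos ⟨subset_insert a K, card_insert_of_notMem ha⟩, insert_sdiff_cancel ha,
    sum_singleton]

lemma inc_mul_self {F K : Finset α} (h : K ⊆ F) (hc : #F = #K + 1) : inc F K * inc F K = 1 := by
  obtain ⟨a, ha, rfl⟩ := exists_eq_insert_iff.mpr ⟨h, hc.symm⟩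
  rw [inc_insert ha, ← pow_add, Even.neg_one_pow ⟨_, rfl⟩]

lemma card_filter_lt_insert {I : Finset α} {a : α} (ha : a ∉ I) (b : α) :
    #{y ∈ insert a I | y < b} = #{y ∈ I | y < b} + if a < b then 1 else 0 := by
  rw [filter_insert]
  split_ifs
  · exact card_insert_of_notMem fun h => ha (mem_filter.mp h).1
  · rfl

/-- Exactly one of `a < b`, `b < a` holds, which produces the sign. -/
lemma inc_insert_insert_mul {I : Finset α} {a b : α} (hab : a ≠ b) (ha : a ∉ I) (hb : b ∉ I) :
    inc (insert b (insert a I)) (insert a I) * inc (insert a (insert b I)) (insert b I) =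
      -(inc (insert a I) I * inc (insert b I) I) := by
  have hb' : b ∉ insert a I := by simp [hab.symm, hb]
  have ha' : a ∉ insert b I := by simp [hab, ha]
  rw [inc_insert hb', inc_insert ha', inc_insert ha, inc_insert hb, card_filter_lt_insert ha,
    card_filter_lt_insert hb]
  rcases hab.lt_or_gt with h | h <;>
  · simp only [h, h.not_gt, if_true, if_false, add_zero, pow_succ]
    ring

lemma eps_self (F : Finset α) : eps F F = 0 := by
  rw [eps, inc_eq_zero (by simp), zero_mul]

lemma eps_comm (F G : Finset α) : eps F G = eps G F := by
  rw [eps, eps, inter_comm, mul_comm]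

lemma eps_eq_zero_of_card_union {k : ℕ} {F G : Finset α} (hF : #F = k) (hG : #G = k)
    (h : k + 2 ≤ #(F ∪ G)) : eps F G = 0 := by
  have := card_union_add_card_inter F G
  rw [eps, inc_eq_zero (by omega), zero_mul]

lemma inc_union_mul_inc_union {k : ℕ} {F G : Finset α} (hF : #F = k) (hG : #G = k)
    (hne : F ≠ G) (hu : #(F ∪ G) = k + 1) :
    inc (F ∪ G) F * inc (F ∪ G) G = -eps F G := by
  have hcard := card_union_add_card_inter F G
  obtain ⟨a, ha, hFa⟩ := exists_eq_insert_iff.mpr ⟨inter_subset_left (s₁ := F) (s₂ := G), by omega⟩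
  obtain ⟨b, hb, hGb⟩ := exists_eq_insert_iff.mpr ⟨inter_subset_right (s₁ := F) (s₂ := G), by omega⟩
  have hab : a ≠ b := by rintro rfl; exact hne (hFa.symm.trans hGb)
  have key := inc_insert_insert_mul hab ha hb
  rw [hFa, hGb] at key
  have hF' (x) : x ∈ F ↔ x = a ∨ x ∈ F ∧ x ∈ G := by rw [← mem_inter, ← mem_insert, hFa]
  have hG' (x) : x ∈ G ↔ x = b ∨ x ∈ F ∧ x ∈ G := by rw [← mem_inter, ← mem_insert, hGb]
  have hUF : insert b F = F ∪ G := by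
    ext x; simp only [mem_insert, mem_union]; have := hG' x; tauto
  have hUG : insert a G = F ∪ G := by
    ext x; simp only [mem_insert, mem_union]; have := hF' x; tauto
  rwa [hUF, hUG] at key

lemma inc_mul_inc_eq_zero {H F G : Finset α} (h : ¬F ∪ G ⊆ H) : inc H F * inc H G = 0 := by
  rw [union_subset_iff, not_and_or] at h
  rcases h with h | h
  · rw [inc_eq_zero fun h' => h h'.1, zero_mul]
  · rw [inc_eq_zero (K := G) fun h' => h h'.1, mul_zero]

lemma eps_eq_neg_inc_mul_inc {k : ℕ} {H F G : Finset α} (hH : #H = k + 1)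
    (hF : F ∈ H.powersetCard k) (hG : G ∈ H.powersetCard k) (hne : F ≠ G) :
    eps F G = -(inc H F * inc H G) := by
  rw [← union_eq_of_mem_powersetCard hH hF hG hne, inc_union_mul_inc_union
    (mem_powersetCard.mp hF).2 (mem_powersetCard.mp hG).2 hne
    (by rw [union_eq_of_mem_powersetCard hH hF hG hne, hH]), neg_neg]

end Incidence

section Faces

variable {α : Type} [DecidableEq α]

lemma filter_dfaces_subset {X : SC α} {k : ℕ} {H : Finset α} (hH : H ∈ X.faces) :
    (X.dfaces k).filter (· ⊆ H) = H.powersetCard k := by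
  ext F
  simp only [SC.dfaces, mem_filter, mem_powersetCard]
  exact ⟨fun h => ⟨h.2, h.1.2⟩, fun h => ⟨⟨X.down_closed hH h.1, h.2⟩, h.1⟩⟩

lemma mem_compl_dfaces [Fintype α] {X : SC α} {k : ℕ} {S : Finset α} :
    S ∈ (X.compl k).dfaces (k + 1) ↔ #S = k + 1 ∧ S ∉ X.faces := by
  simp only [SC.dfaces, SC.compl, mem_filter, mem_univ, true_and]
  constructor
  · exact fun h => ⟨h.2, h.1.2 h.2⟩
  · exact fun h => ⟨⟨h.1.le, fun _ => h.2⟩, h.1⟩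

lemma eq_of_union_eq_union_self [Fintype α] {k : ℕ} {F G G' : KSet α k}
    (hu : F.1 ∪ F.1 = G.1 ∪ G'.1) : G = G' := by
  by_contra hne
  have := succ_le_card_union G.2 G'.2 (Subtype.coe_ne_coe.mpr hne)
  rw [← hu, union_self, F.2] at this
  omega

end Faces

section CompleteLaplacian

def incMat (V : Type) [Fintype V] [DecidableEq V] [LinearOrder V] (k : ℕ) :
    Matrix (KSet V (k + 1)) (KSet V k) ℝ :=
  fun H F => inc H.1 F.1

lemma sum_inc_mul_self {k : ℕ} (F : KSet V k) :
    ∑ H : KSet V (k + 1), inc H.1 F.1 * inc H.1 F.1 = Fintype.card V - k := by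
  rw [← sum_subtype (powersetCard (k + 1) univ) (fun _ => mem_powersetCard_univ)
    (fun H => inc H F.1 * inc H F.1)]
  have hk : k ≤ Fintype.card V := F.2 ▸ card_le_univ F.1
  calc ∑ H ∈ powersetCard (k + 1) univ, inc H F.1 * inc H F.1
      = ∑ H ∈ powersetCard (k + 1) univ, if F.1 ⊆ H then 1 else 0 := by
        refine sum_congr rfl fun H hH => ?_
        split_ifs with h
        · exact inc_mul_self h (by rw [(mem_powersetCard.mp hH).2, F.2])
        · exact inc_mul_inc_eq_zero (by rwa [union_self])
    _ = Fintype.card V - k := by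
        rw [sum_boole, card_filter_powersetCard_subset _ _ _ (subset_univ _)
          (by omega), card_univ, F.2, Nat.add_sub_cancel_left, Nat.choose_one_right,
          Nat.cast_sub hk]

lemma sum_inc_mul_inc_of_ne {k : ℕ} {F G : KSet V k} (hne : F ≠ G) :
    ∑ H : KSet V (k + 1), inc H.1 F.1 * inc H.1 G.1 = -eps F.1 G.1 := by
  have hne' : F.1 ≠ G.1 := Subtype.coe_ne_coe.mpr hne
  rcases (succ_le_card_union F.2 G.2 hne').eq_or_lt with hu | hu
  · rw [sum_eq_single_of_mem ⟨F.1 ∪ G.1, hu.symm⟩ (mem_univ _),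
      inc_union_mul_inc_union F.2 G.2 hne' hu.symm]
    intro H _ hH
    refine inc_mul_inc_eq_zero fun hsub => hH (Subtype.ext ?_)
    exact (eq_of_subset_of_card_le hsub (by rw [H.2, hu])).symm
  · rw [eps_eq_zero_of_card_union F.2 G.2 hu, neg_zero]
    refine sum_eq_zero fun H _ => inc_mul_inc_eq_zero fun hsub => ?_
    have := card_le_card hsub
    rw [H.2] at this
    omega

lemma Lc_eq (k : ℕ) : Lc V k = (Fintype.card V : ℝ) • 1 - (incMat V k)ᵀ * incMat V k := by
  ext F G
  simp only [Lc, Matrix.sub_apply, Matrix.smul_apply, one_apply, mul_apply, transpose_apply,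
    incMat, smul_eq_mul]
  split_ifs with h
  · subst h
    rw [sum_inc_mul_self]
    ring
  · rw [sum_inc_mul_inc_of_ne h]
    ring

lemma trace_Lc_mul_le_card {k : ℕ} {Y : Matrix (KSet V k) (KSet V k) ℝ} (hY : Y.PosSemidef)
    (htr : trace Y = 1) : trace (Lc V k * Y) ≤ Fintype.card V := by
  have hD := (hY.mul_mul_conjTranspose_same (incMat V k)).trace_nonneg
  rw [conjTranspose_eq_transpose_of_trivial, trace_mul_comm] at hD
  rw [Lc_eq, Matrix.sub_mul, trace_sub, Matrix.smul_mul, Matrix.one_mul, trace_smul, htr,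
    smul_eq_mul, mul_one, Matrix.mul_assoc]
  linarith

lemma trace_Lc_mul (k : ℕ) (Y : Matrix (KSet V k) (KSet V k) ℝ) :
    trace (Lc V k * Y) = k * trace Y + ∑ F, ∑ G, eps F.1 G.1 * Y F G := by
  have hLc : ∀ F G, Lc V k F G = (if F = G then (k : ℝ) else 0) + eps F.1 G.1 := by
    intro F G
    split_ifs with h
    · rw [Lc, if_pos h, h, eps_self, add_zero]
    · rw [Lc, if_neg h, zero_add]
  simp only [trace, Matrix.diag, mul_apply, hLc, add_mul, sum_add_distrib, ite_mul, zero_mul,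
    sum_ite_eq, mem_univ, if_true, mul_sum]
  congr 1
  rw [sum_comm]
  refine sum_congr rfl fun F _ => sum_congr rfl fun G _ => ?_
  rw [eps_comm]

end CompleteLaplacian

section Theta

lemma le_theta {Z : SC V} {k : ℕ} {Y : Matrix (KSet V k) (KSet V k) ℝ}
    (hY : thetaFeasible Z k Y) : trace (Lc V k * Y) ≤ theta Z k := by
  refine le_csSup ⟨Fintype.card V, ?_⟩ ⟨Y, hY, rfl⟩
  rintro _ ⟨Y', hY', rfl⟩
  exact trace_Lc_mul_le_card hY'.1 hY'.2.1

lemma theta_le_card (Z : SC V) (k : ℕ) : theta Z k ≤ Fintype.card V :=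
  Real.sSup_le (fun _ ⟨_, hY, hval⟩ => hval ▸ trace_Lc_mul_le_card hY.1 hY.2.1)
    (Nat.cast_nonneg _)

lemma mem_dfaces_of_thetaFeasible_compl {X : SC V} {k : ℕ} {Y : Matrix (KSet V k) (KSet V k) ℝ}
    (hY : thetaFeasible (X.compl k) k Y) {F G : KSet V k} (hne : F ≠ G) (h : Y F G ≠ 0) :
    F.1 ∪ G.1 ∈ X.dfaces (k + 1) := by
  have hlb := succ_le_card_union F.2 G.2 (Subtype.coe_ne_coe.mpr hne)
  have hcard : #(F.1 ∪ G.1) = k + 1 := by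
    by_contra hc
    exact h (hY.2.2.2.1 F G (by omega))
  by_contra hX
  exact h (hY.2.2.1 F G (mem_compl_dfaces.mpr ⟨hcard, fun hf => hX (mem_filter.mpr ⟨hf, hcard⟩)⟩))

lemma mem_dfaces_of_eps_mul_ne_zero {X : SC V} {k : ℕ} {Y : Matrix (KSet V k) (KSet V k) ℝ}
    (hY : thetaFeasible (X.compl k) k Y) {F G : KSet V k} (h : eps F.1 G.1 * Y F G ≠ 0) :
    F ≠ G ∧ F.1 ∪ G.1 ∈ X.dfaces (k + 1) := by
  have hne : F ≠ G := by rintro rfl; rw [eps_self, zero_mul] at h; exact h rfl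
  exact ⟨hne, mem_dfaces_of_thetaFeasible_compl hY hne (right_ne_zero_of_mul h)⟩

lemma thetaFeasible_compl_of_offDiag {X : SC V} {k : ℕ} {Y : Matrix (KSet V k) (KSet V k) ℝ}
    (hpsd : Y.PosSemidef) (htr : trace Y = 1)
    (hsupp : ∀ F G, F ≠ G → Y F G ≠ 0 → F.1 ∪ G.1 ∈ X.dfaces (k + 1))
    (heps : ∀ F F' G G' : KSet V k, F ≠ F' → G ≠ G' → F.1 ∪ F'.1 = G.1 ∪ G'.1 →
      eps F.1 F'.1 * Y F F' = eps G.1 G'.1 * Y G G') :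
    thetaFeasible (X.compl k) k Y := by
  have hcard {F G} (hne : F ≠ G) (h : Y F G ≠ 0) : #(F.1 ∪ G.1) = k + 1 :=
    (mem_filter.mp (hsupp F G hne h)).2
  refine ⟨hpsd, htr, fun F G hFG => ?_, fun F G hFG => ?_, fun F F' G G' hu => ?_⟩
  · rcases eq_or_ne F G with rfl | hne
    · have := (mem_compl_dfaces.mp hFG).1
      rw [union_self, F.2] at this
      omega
    · by_contra h
      exact (mem_compl_dfaces.mp hFG).2 (mem_filter.mp (hsupp F G hne h)).1
  · rcases eq_or_ne F G with rfl | hne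
    · rw [union_self, F.2] at hFG
      omega
    · by_contra h
      rw [hcard hne h] at hFG
      omega
  · rcases eq_or_ne F F' with rfl | hF
    · rw [eq_of_union_eq_union_self hu, eps_self, eps_self, zero_mul, zero_mul]
    rcases eq_or_ne G G' with rfl | hG
    · rw [eq_of_union_eq_union_self hu.symm, eps_self, eps_self, zero_mul, zero_mul]
    exact heps F F' G G' hF hG hu

lemma natCast_le_theta_compl (X : SC V) {k : ℕ} (A : KSet V k) :
    (k : ℝ) ≤ theta (X.compl k) k := by
  set Y : Matrix (KSet V k) (KSet V k) ℝ := diagonal (Pi.single A 1)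
  have hoff : ∀ F G, F ≠ G → Y F G = 0 := fun F G h => diagonal_apply_ne _ h
  have hfeas : thetaFeasible (X.compl k) k Y :=
    thetaFeasible_compl_of_offDiag (PosSemidef.diagonal (Pi.single_nonneg.mpr zero_le_one))
      (by simp [Y]) (fun F G h h0 => (h0 (hoff F G h)).elim)
      (fun F F' G G' hF hG _ => by rw [hoff F F' hF, hoff G G' hG, mul_zero, mul_zero])
  have hval : trace (Lc V k * Y) = k := by
    rw [trace_Lc_mul, hfeas.2.1, mul_one, add_eq_left]
    refine sum_eq_zero fun F _ => sum_eq_zero fun G _ => ?_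
    rcases eq_or_ne F G with rfl | h
    · rw [eps_self, zero_mul]
    · rw [hoff F G h, mul_zero]
  exact hval ▸ le_theta hfeas

end Theta

section SignedPush

variable {ι κ : Type} [Fintype ι] [DecidableEq κ]

lemma sum_fiberwise_fiberwise [Fintype κ] {M : Type} [AddCommMonoid M] (g : ι → κ)
    (T : ι → ι → M) :
    ∑ a, ∑ b, ∑ i with g i = a, ∑ j with g j = b, T i j = ∑ i, ∑ j, T i j := by
  calc ∑ a, ∑ b, ∑ i with g i = a, ∑ j with g j = b, T i j
      = ∑ a, ∑ i with g i = a, ∑ b, ∑ j with g j = b, T i j := by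
        simp only [sum_comm (s := (univ : Finset κ)) (t := filter _ _)]
    _ = ∑ i, ∑ j, T i j := by simp only [sum_fiberwise]

lemma sum_filter_sum_filter_eq_sum_fiberwise [Fintype κ] {β M : Type} [Fintype β] [DecidableEq β]
    [AddCommMonoid M] (g : ι → κ) (u : ι → ι → β) (a b : κ) (T : ι → ι → M) :
    ∑ i with g i = a, ∑ j with g j = b, T i j =
      ∑ c, ∑ p : ι × ι with g p.1 = a ∧ g p.2 = b ∧ u p.1 p.2 = c, T p.1 p.2 := by
  rw [← sum_product', ← sum_fiberwise _ (fun p => u p.1 p.2)]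
  refine sum_congr rfl fun c _ => sum_congr ?_ fun _ _ => rfl
  ext p
  simp [and_assoc]

def signedPush (g : ι → κ) (σ : ι → ℝ) : Matrix ι κ ℝ :=
  fun i a => if g i = a then σ i else 0

variable (g : ι → κ) (σ : ι → ℝ)

lemma signedPush_conj_apply (Y : Matrix ι ι ℝ) (a b : κ) :
    ((signedPush g σ)ᵀ * Y * signedPush g σ) a b =
      ∑ i with g i = a, ∑ j with g j = b, σ i * σ j * Y i j := by
  simp only [mul_apply, transpose_apply, signedPush, sum_mul, sum_filter]
  rw [sum_comm]
  refine sum_congr rfl fun i _ => ?_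
  split_ifs with hi
  · refine sum_congr rfl fun j _ => ?_
    split_ifs <;> ring
  · simp

lemma Matrix.PosSemidef.signedPush_conj [Fintype κ] {Y : Matrix ι ι ℝ} (hY : Y.PosSemidef) :
    ((signedPush g σ)ᵀ * Y * signedPush g σ).PosSemidef := by
  simpa only [conjTranspose_eq_transpose_of_trivial] using
    hY.conjTranspose_mul_mul_same (signedPush g σ)

lemma trace_signedPush_conj [Fintype κ] {Y : Matrix ι ι ℝ} (hσ : ∀ i, σ i * σ i = 1)
    (hY : ∀ i j, i ≠ j → g i = g j → Y i j = 0) :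
    trace ((signedPush g σ)ᵀ * Y * signedPush g σ) = trace Y := by
  simp only [trace, Matrix.diag, signedPush_conj_apply]
  rw [← sum_fiberwise univ g fun i => Y i i]
  refine sum_congr rfl fun a _ => sum_congr rfl fun i hi => ?_
  rw [(mem_filter.mp hi).2.symm, sum_eq_single_of_mem i (by simp), hσ, one_mul]
  intro j hj hji
  rw [hY i j hji.symm (mem_filter.mp hj).2.symm, mul_zero]

end SignedPush

section Hom

variable {W : Type} [Fintype W] [DecidableEq W] [LinearOrder W]

def IsSignedHom (X : SC V) (X' : SC W) (k : ℕ) (f : Finset V → Finset W)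
    (σ : Finset V → ℝ) : Prop :=
  (∀ F ∈ X.dfaces k, f F ∈ X'.dfaces k) ∧ (∀ F, σ F * σ F = 1) ∧
  ∀ H ∈ X.dfaces (k + 1), ∃ H' ∈ X'.dfaces (k + 1),
    Set.BijOn f (H.powersetCard k) (H'.powersetCard k) ∧
    ∀ F ∈ H.powersetCard k, ∀ G ∈ H.powersetCard k, eps (f F) (f G) * σ F * σ G = eps F G

lemma IsHom.exists_isSignedHom {X : SC V} {X' : SC W} {k : ℕ} {f : Finset V → Finset W}
    (hf : IsHom X X' k f) : ∃ σ, IsSignedHom X X' k f σ := by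
  obtain ⟨hfd, s, s', hs, hs', hhom⟩ := hf
  have hs2 (F) : s F * s F = 1 := mul_self_eq_one_iff.mpr (hs F)
  have hs'2 (F) : s' F * s' F = 1 := mul_self_eq_one_iff.mpr (hs' F)
  have hσ (F) : s F * s' (f F) * (s F * s' (f F)) = 1 := by
    linear_combination s' (f F) * s' (f F) * hs2 F + hs'2 (f F)
  refine ⟨fun F => s F * s' (f F), hfd, hσ, fun H hH => ?_⟩
  obtain ⟨H', hH', himg, hsgn⟩ := hhom H hH
  have hcH : #H = k + 1 := (mem_filter.mp hH).2
  have hcH' : #H' = k + 1 := (mem_filter.mp hH').2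
  rw [filter_dfaces_subset (mem_filter.mp hH).1, filter_dfaces_subset (mem_filter.mp hH').1]
    at himg
  have hbij : Set.BijOn f (H.powersetCard k) (H'.powersetCard k) :=
    bijOn_of_image_eq himg (by rw [card_powersetCard, card_powersetCard, hcH, hcH'])
  refine ⟨H', hH', hbij, fun F hF G hG => ?_⟩
  rcases eq_or_ne F G with rfl | hne
  · rw [eps_self, eps_self, zero_mul, zero_mul]
  have hmem {F} (hF : F ∈ H.powersetCard k) : F ∈ X.dfaces k :=
    mem_filter.mpr ⟨X.down_closed (mem_filter.mp hH).1 (mem_powersetCard.mp hF).1,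
      (mem_powersetCard.mp hF).2⟩
  have e1 := hsgn F (hmem hF) (mem_powersetCard.mp hF).1
  have e2 := hsgn G (hmem hG) (mem_powersetCard.mp hG).1
  have hE := eps_eq_neg_inc_mul_inc hcH hF hG hne
  have hE' := eps_eq_neg_inc_mul_inc hcH' (hbij.mapsTo hF) (hbij.mapsTo hG)
    (hbij.injOn.ne hF hG hne)
  have h12 : s' (f F) * s' (f G) * (inc H' (f F) * inc H' (f G)) =
      s F * s G * (inc H F * inc H G) := by
    have e12 := congrArg₂ (· * ·) e1 e2
    linear_combination e12 - s' (f F) * s' (f G) * (inc H' (f F) * inc H' (f G)) * hs'2 H' +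
      s F * s G * (inc H F * inc H G) * hs2 H
  rw [hE, hE']
  linear_combination (-(s F * s G)) * h12 - inc H F * inc H G * s G * s G * hs2 F -
    inc H F * inc H G * hs2 G

end Hom

section KSetMap

variable {α β : Type} [Fintype α] [DecidableEq α] [Fintype β] [DecidableEq β]
  {X : SC α} {X' : SC β} {k : ℕ} {f : Finset α → Finset β} {A₀ : KSet β k}

/-- Only the values on `(k-1)`-faces of a complex matter; the default `A₀` makes the map total. -/
def kSetMap (f : Finset α → Finset β) (A₀ : KSet β k) (F : KSet α k) : KSet β k :=
  if h : #(f F.1) = k then ⟨f F.1, h⟩ else A₀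

lemma coe_kSetMap_of_subset (hfd : ∀ F ∈ X.dfaces k, f F ∈ X'.dfaces k) {H : Finset α}
    (hH : H ∈ X.dfaces (k + 1)) {F : KSet α k} (hF : F.1 ⊆ H) :
    (kSetMap f A₀ F).1 = f F.1 := by
  have hmem : F.1 ∈ X.dfaces k := mem_filter.mpr ⟨X.down_closed (mem_filter.mp hH).1 hF, F.2⟩
  rw [kSetMap, dif_pos (mem_filter.mp (hfd _ hmem)).2]

lemma eq_of_kSetMap_eq (hfd : ∀ F ∈ X.dfaces k, f F ∈ X'.dfaces k) {H : Finset α} {H' : Finset β}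
    (hH : H ∈ X.dfaces (k + 1)) (hbij : Set.BijOn f (H.powersetCard k) (H'.powersetCard k))
    {F G : KSet α k} (hF : F.1 ⊆ H) (hG : G.1 ⊆ H) (h : kSetMap f A₀ F = kSetMap f A₀ G) :
    F = G := by
  refine Subtype.ext (hbij.injOn (mem_powersetCard.mpr ⟨hF, F.2⟩)
    (mem_powersetCard.mpr ⟨hG, G.2⟩) ?_)
  rw [← coe_kSetMap_of_subset hfd hH hF, ← coe_kSetMap_of_subset hfd hH hG, h]

lemma kSetMap_union_eq (hfd : ∀ F ∈ X.dfaces k, f F ∈ X'.dfaces k) {H : Finset α}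
    {H' : Finset β} (hH : H ∈ X.dfaces (k + 1)) (hH' : H' ∈ X'.dfaces (k + 1))
    (hbij : Set.BijOn f (H.powersetCard k) (H'.powersetCard k))
    {F G : KSet α k} (hF : F.1 ⊆ H) (hG : G.1 ⊆ H) (hne : F ≠ G) :
    (kSetMap f A₀ F).1 ∪ (kSetMap f A₀ G).1 = H' := by
  refine union_eq_of_mem_powersetCard (mem_filter.mp hH').2 ?_ ?_
    (Subtype.coe_ne_coe.mpr fun h => hne (eq_of_kSetMap_eq hfd hH hbij hF hG h))
  · rw [coe_kSetMap_of_subset hfd hH hF]; exact hbij.mapsTo (mem_powersetCard.mpr ⟨hF, F.2⟩)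
  · rw [coe_kSetMap_of_subset hfd hH hG]; exact hbij.mapsTo (mem_powersetCard.mpr ⟨hG, G.2⟩)

lemma exists_kSetMap_eq (hfd : ∀ F ∈ X.dfaces k, f F ∈ X'.dfaces k) {H : Finset α}
    {H' : Finset β} (hH : H ∈ X.dfaces (k + 1))
    (hbij : Set.BijOn f (H.powersetCard k) (H'.powersetCard k)) {A : KSet β k} (hA : A.1 ⊆ H') :
    ∃ F : KSet α k, F.1 ⊆ H ∧ kSetMap f A₀ F = A := by
  obtain ⟨F, hF, hFA⟩ := hbij.surjOn (mem_powersetCard.mpr ⟨hA, A.2⟩)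
  have hFH := (mem_powersetCard.mp hF).1
  refine ⟨⟨F, (mem_powersetCard.mp hF).2⟩, hFH, Subtype.ext ?_⟩
  rw [coe_kSetMap_of_subset hfd hH hFH, hFA]

end KSetMap

section Pushforward

variable {W : Type} [Fintype W] [DecidableEq W] [LinearOrder W]
  {X : SC V} {X' : SC W} {k : ℕ} {f : Finset V → Finset W} {σ : Finset V → ℝ} {A₀ : KSet W k}

def pushforward (f : Finset V → Finset W) (σ : Finset V → ℝ) (A₀ : KSet W k)
    (Y : Matrix (KSet V k) (KSet V k) ℝ) : Matrix (KSet W k) (KSet W k) ℝ :=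
  (signedPush (kSetMap f A₀) (σ ∘ Subtype.val))ᵀ * Y * signedPush (kSetMap f A₀) (σ ∘ Subtype.val)

variable {Y : Matrix (KSet V k) (KSet V k) ℝ}

lemma trace_pushforward
    (hσ : IsSignedHom X X' k f σ) (hY : thetaFeasible (X.compl k) k Y) :
    trace (pushforward f σ A₀ Y) = trace Y := by
  refine trace_signedPush_conj _ _ (fun F => hσ.2.1 F) fun F G hne hFG => ?_
  by_contra h
  have hH := mem_dfaces_of_thetaFeasible_compl hY hne h
  obtain ⟨H', -, hbij, -⟩ := hσ.2.2 _ hH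
  exact hne (eq_of_kSetMap_eq hσ.1 hH hbij subset_union_left subset_union_right hFG)

lemma mem_dfaces_of_pushforward_ne_zero
    (hσ : IsSignedHom X X' k f σ) (hY : thetaFeasible (X.compl k) k Y)
    {A B : KSet W k} (hne : A ≠ B) (h : pushforward f σ A₀ Y A B ≠ 0) :
    A.1 ∪ B.1 ∈ X'.dfaces (k + 1) := by
  rw [pushforward, signedPush_conj_apply] at h
  obtain ⟨F, hF, h⟩ := exists_ne_zero_of_sum_ne_zero h
  obtain ⟨G, hG, h⟩ := exists_ne_zero_of_sum_ne_zero h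
  rw [(mem_filter.mp hF).2.symm, (mem_filter.mp hG).2.symm] at hne ⊢
  have hFG : F ≠ G := by rintro rfl; exact hne rfl
  have hH := mem_dfaces_of_thetaFeasible_compl hY hFG (right_ne_zero_of_mul h)
  obtain ⟨H', hH', hbij, -⟩ := hσ.2.2 _ hH
  rwa [kSetMap_union_eq hσ.1 hH hH' hbij subset_union_left subset_union_right hFG]

lemma eps_mul_pushforward_apply
    (hσ : IsSignedHom X X' k f σ) (hY : thetaFeasible (X.compl k) k Y)
    (A B : KSet W k) :
    eps A.1 B.1 * pushforward f σ A₀ Y A B =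
      ∑ F with kSetMap f A₀ F = A, ∑ G with kSetMap f A₀ G = B, eps F.1 G.1 * Y F G := by
  rw [pushforward, signedPush_conj_apply, mul_sum]
  refine sum_congr rfl fun F hF => ?_
  rw [mul_sum]
  refine sum_congr rfl fun G hG => ?_
  rw [← (mem_filter.mp hF).2, ← (mem_filter.mp hG).2]
  rcases eq_or_ne F G with rfl | hne
  · rw [eps_self, eps_self, zero_mul, zero_mul]
  by_cases h : Y F G = 0
  · rw [h, mul_zero, mul_zero, mul_zero]
  have hH := mem_dfaces_of_thetaFeasible_compl hY hne h
  obtain ⟨H', -, -, heps⟩ := hσ.2.2 _ hH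
  have hF' : F.1 ∈ (F.1 ∪ G.1).powersetCard k := mem_powersetCard.mpr ⟨subset_union_left, F.2⟩
  have hG' : G.1 ∈ (F.1 ∪ G.1).powersetCard k := mem_powersetCard.mpr ⟨subset_union_right, G.2⟩
  rw [coe_kSetMap_of_subset hσ.1 hH subset_union_left,
    coe_kSetMap_of_subset hσ.1 hH subset_union_right, ← heps _ hF' _ hG']
  simp only [Function.comp_apply]
  ring

def unionFiberSum (f : Finset V → Finset W) (A₀ : KSet W k) (Y : Matrix (KSet V k) (KSet V k) ℝ)
    (A B : KSet W k) (H : Finset V) : ℝ :=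
  ∑ p : KSet V k × KSet V k with kSetMap f A₀ p.1 = A ∧ kSetMap f A₀ p.2 = B ∧ p.1.1 ∪ p.2.1 = H,
    eps p.1.1 p.2.1 * Y p.1 p.2

lemma eps_mul_pushforward_eq_sum_unionFiberSum
    (hσ : IsSignedHom X X' k f σ) (hY : thetaFeasible (X.compl k) k Y) (A B : KSet W k) :
    eps A.1 B.1 * pushforward f σ A₀ Y A B = ∑ H, unionFiberSum f A₀ Y A B H := by
  rw [eps_mul_pushforward_apply hσ hY,
    sum_filter_sum_filter_eq_sum_fiberwise _ (fun F G => F.1 ∪ G.1)]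
  rfl

lemma unionFiberSum_eq_zero (hσ : IsSignedHom X X' k f σ) (hY : thetaFeasible (X.compl k) k Y)
    {H : Finset V} {H' : Finset W} (hH : H ∈ X.dfaces (k + 1)) (hH' : H' ∈ X'.dfaces (k + 1))
    (hbij : Set.BijOn f (H.powersetCard k) (H'.powersetCard k))
    {A B : KSet W k} (hAB : A.1 ∪ B.1 ≠ H') : unionFiberSum f A₀ Y A B H = 0 := by
  refine sum_eq_zero fun p hp => ?_
  obtain ⟨rfl, rfl, hpH⟩ := (mem_filter.mp hp).2
  by_contra h
  exact hAB (kSetMap_union_eq hσ.1 hH hH' hbij (hpH ▸ subset_union_left)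
    (hpH ▸ subset_union_right) (mem_dfaces_of_eps_mul_ne_zero hY h).1)

/-- Exactly one pair of `(k-1)`-faces of `H` maps to `(A, B)`. -/
lemma exists_unionFiberSum_eq (hσ : IsSignedHom X X' k f σ) {H : Finset V} {H' : Finset W}
    (hH : H ∈ X.dfaces (k + 1)) (hbij : Set.BijOn f (H.powersetCard k) (H'.powersetCard k))
    {A B : KSet W k} (hAB : A ≠ B) (hABH : A.1 ∪ B.1 = H') :
    ∃ F G : KSet V k, F.1 ∪ G.1 = H ∧ unionFiberSum f A₀ Y A B H = eps F.1 G.1 * Y F G := by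
  obtain ⟨F, hFH, rfl⟩ := exists_kSetMap_eq (A₀ := A₀) hσ.1 hH hbij (hABH ▸ subset_union_left)
  obtain ⟨G, hGH, rfl⟩ := exists_kSetMap_eq (A₀ := A₀) hσ.1 hH hbij (hABH ▸ subset_union_right)
  have hFG : F.1 ∪ G.1 = H := union_eq_of_mem_powersetCard (mem_filter.mp hH).2
    (mem_powersetCard.mpr ⟨hFH, F.2⟩) (mem_powersetCard.mpr ⟨hGH, G.2⟩)
    (Subtype.coe_ne_coe.mpr fun h => hAB (h ▸ rfl))
  refine ⟨F, G, hFG, sum_eq_single_of_mem (F, G) (by simp [hFG]) fun p hp hpne => ?_⟩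
  obtain ⟨h1, h2, hpH⟩ := (mem_filter.mp hp).2
  refine (hpne (Prod.ext ?_ ?_)).elim
  · exact eq_of_kSetMap_eq hσ.1 hH hbij (hpH ▸ subset_union_left) hFH h1
  · exact eq_of_kSetMap_eq hσ.1 hH hbij (hpH ▸ subset_union_right) hGH h2

lemma unionFiberSum_eq (hσ : IsSignedHom X X' k f σ) (hY : thetaFeasible (X.compl k) k Y)
    {A B C D : KSet W k} (hAB : A ≠ B) (hCD : C ≠ D) (hu : A.1 ∪ B.1 = C.1 ∪ D.1)
    (H : Finset V) : unionFiberSum f A₀ Y A B H = unionFiberSum f A₀ Y C D H := by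
  by_cases hH : H ∈ X.dfaces (k + 1)
  swap
  · have h0 (A B : KSet W k) : unionFiberSum f A₀ Y A B H = 0 :=
      sum_eq_zero fun p hp => by_contra fun h =>
        hH ((mem_filter.mp hp).2.2.2 ▸ (mem_dfaces_of_eps_mul_ne_zero hY h).2)
    rw [h0, h0]
  obtain ⟨H', hH', hbij, -⟩ := hσ.2.2 H hH
  by_cases hABH : A.1 ∪ B.1 = H'
  · obtain ⟨F, G, hFG, hAB⟩ := exists_unionFiberSum_eq (Y := Y) hσ hH hbij hAB hABH
    obtain ⟨F', G', hFG', hCD⟩ := exists_unionFiberSum_eq (Y := Y) hσ hH hbij hCD (hu ▸ hABH)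
    rw [hAB, hCD]
    exact hY.2.2.2.2 F G F' G' (hFG.trans hFG'.symm)
  · rw [unionFiberSum_eq_zero hσ hY hH hH' hbij hABH,
      unionFiberSum_eq_zero hσ hY hH hH' hbij (hu ▸ hABH)]

lemma eps_mul_pushforward_eq
    (hσ : IsSignedHom X X' k f σ) (hY : thetaFeasible (X.compl k) k Y)
    {A B C D : KSet W k} (hAB : A ≠ B) (hCD : C ≠ D) (hu : A.1 ∪ B.1 = C.1 ∪ D.1) :
    eps A.1 B.1 * pushforward f σ A₀ Y A B = eps C.1 D.1 * pushforward f σ A₀ Y C D := by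
  rw [eps_mul_pushforward_eq_sum_unionFiberSum hσ hY,
    eps_mul_pushforward_eq_sum_unionFiberSum hσ hY]
  exact sum_congr rfl fun H _ => unionFiberSum_eq hσ hY hAB hCD hu H

lemma thetaFeasible_pushforward
    (hσ : IsSignedHom X X' k f σ) (hY : thetaFeasible (X.compl k) k Y) :
    thetaFeasible (X'.compl k) k (pushforward f σ A₀ Y) :=
  thetaFeasible_compl_of_offDiag (hY.1.signedPush_conj _ _)
    (by rw [trace_pushforward hσ hY, hY.2.1])
    (fun _ _ => mem_dfaces_of_pushforward_ne_zero hσ hY)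
    (fun _ _ _ _ => eps_mul_pushforward_eq hσ hY)

lemma trace_Lc_mul_pushforward
    (hσ : IsSignedHom X X' k f σ) (hY : thetaFeasible (X.compl k) k Y) :
    trace (Lc W k * pushforward f σ A₀ Y) = trace (Lc V k * Y) := by
  rw [trace_Lc_mul, trace_Lc_mul, trace_pushforward hσ hY]
  simp only [eps_mul_pushforward_apply hσ hY, sum_fiberwise_fiberwise]

end Pushforward

section Main

variable {W : Type} [Fintype W] [DecidableEq W] [LinearOrder W]

lemma IsHom.nonempty_kSet {X : SC V} {X' : SC W} {k : ℕ} {f : Finset V → Finset W}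
    (hf : IsHom X X' k f) (hne : (X.dfaces (k + 1)).Nonempty) : Nonempty (KSet W k) := by
  obtain ⟨H, hH⟩ := hne
  obtain ⟨F, hFH, hF⟩ := exists_subset_card_eq (s := H) (n := k) (by simp [(mem_filter.mp hH).2])
  exact ⟨⟨f F, (mem_filter.mp (hf.1 F (mem_filter.mpr
    ⟨X.down_closed (mem_filter.mp hH).1 hFH, hF⟩))).2⟩⟩

theorem theta_compl_le_theta_compl_of_isHom {X : SC V} {X' : SC W} {k : ℕ}
    {f : Finset V → Finset W} (hf : IsHom X X' k f) (hne : (X.dfaces (k + 1)).Nonempty) :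
    theta (X.compl k) k ≤ theta (X'.compl k) k := by
  obtain ⟨A₀⟩ := hf.nonempty_kSet hne
  obtain ⟨σ, hσ⟩ := hf.exists_isSignedHom
  refine Real.sSup_le (fun _ ⟨Y, hY, hval⟩ => ?_)
    ((Nat.cast_nonneg k).trans (natCast_le_theta_compl X' A₀))
  rw [← hval, ← trace_Lc_mul_pushforward (A₀ := A₀) hσ hY]
  exact le_theta (thetaFeasible_pushforward hσ hY)

end Main

theorem theta_compl_le_of_hom_general
    {V W : Type} [Fintype V] [DecidableEq V] [LinearOrder V]
    [Fintype W] [DecidableEq W] [LinearOrder W]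
    (X : SC V) (X' : SC W) (k : ℕ)
    (hne : (X.dfaces (k + 1)).Nonempty)
    (f : Finset V → Finset W) (hf : IsHom X X' k f) :
    theta (X.compl k) k ≤ theta (X'.compl k) k ∧
    ∀ ℓ : ℕ, k ≤ ℓ → ∀ g : Finset V → Finset (Fin ℓ),
      IsHom X (completeComplex (Fin ℓ) k) k g → theta (X.compl k) k ≤ (ℓ : ℝ) := by
  refine ⟨theta_compl_le_theta_compl_of_isHom hf hne, fun ℓ _ g hg => ?_⟩
  calc theta (X.compl k) k ≤ theta ((completeComplex (Fin ℓ) k).compl k) k :=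
        theta_compl_le_theta_compl_of_isHom hg hne
    _ ≤ ℓ := by simpa using theta_le_card ((completeComplex (Fin ℓ) k).compl k) k

/-- If there is a homomorphism from a pure `k`-dimensional complex `X`
to a pure `k`-dimensional complex `X'`, then `ϑ_k(X̄) ≤ ϑ_k(X̄')`, where `X̄` denotes the
complementary complex. In particular, a homomorphism from `X` to the complete complex
`K_ℓ^k` gives `ϑ_k(X̄) ≤ ℓ`. -/
theorem theta_compl_le_of_hom
    {V W : Type} [Fintype V] [DecidableEq V] [LinearOrder V]
    [Fintype W] [DecidableEq W] [LinearOrder W]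
    (X : SC V) (X' : SC W) (k : ℕ) (hk : 1 ≤ k)
    (hX : X.Pure k) (hX' : X'.Pure k) (hne : (X.dfaces (k + 1)).Nonempty)
    (f : Finset V → Finset W) (hf : IsHom X X' k f) :
    theta (X.compl k) k ≤ theta (X'.compl k) k ∧
    ∀ ℓ : ℕ, k ≤ ℓ → ∀ g : Finset V → Finset (Fin ℓ),
      IsHom X (completeComplex (Fin ℓ) k) k g → theta (X.compl k) k ≤ (ℓ : ℝ) :=
  theta_compl_le_of_hom_general X X' k hne f hf
end

section
/- Let X be a pure k-dimensional simplicial complex, ℓ with k ≤ ℓ ≤ α(X), and S an independent set with |S| ≥ ℓ. Define y^S on Ind_{ℓ-1} ∪ Ind_ℓ by y^S_{ℓ-1}(F) = ℓ if F ⊆ S, y^S_{ℓ-1}(H) = 1 if H ⊆ S, and 0 otherwise. Then the linear map τ_{ℓ-1} satisfies τ_{ℓ-1}(y^S_{ℓ-1}) = ((|S| − ℓ + 1)/(ℓ − 1)) · y^S_{ℓ-2}. -/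
open Finset Matrix

variable {V : Type} [Fintype V] [DecidableEq V] [LinearOrder V]

/-- The set of independent sets of cardinality `m` (i.e. `(m-1)`-dimensional faces of the
independence complex) of a pure `k`-dimensional complex `X`. -/
noncomputable def indFaces (X : SC V) (k m : ℕ) : Finset (Finset V) := by
  classical exact univ.filter fun S => S.card = m ∧ X.IsIndep k S

/-- The map `τ_{ℓ-1} : ℝ^{Ind_{ℓ-1} ∪ Ind_ℓ} → ℝ^{Ind_{ℓ-2} ∪ Ind_{ℓ-1}}`, where an
`i`-dimensional independent set has cardinality `i+1`:
`(τ y)(K) = (1/ℓ) Σ_{F ∈ Ind_{ℓ-1}, K ⊂ F} y(F)` for `K ∈ Ind_{ℓ-2}`, and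
`(τ y)(F) = (1/(ℓ(ℓ-1))) y(F) + (1/(ℓ-1)) Σ_{H ∈ Ind_ℓ, F ⊂ H} y(H)` for
`F ∈ Ind_{ℓ-1}`, and `0` elsewhere. -/
noncomputable def tauMap (X : SC V) (k ℓ : ℕ) (y : Finset V → ℝ) : Finset V → ℝ :=
  fun A =>
    if A ∈ indFaces X k (ℓ - 1) then
      (ℓ : ℝ)⁻¹ * ∑ F ∈ (indFaces X k ℓ).filter (fun F => A ⊆ F), y F
    else if A ∈ indFaces X k ℓ then
      ((ℓ : ℝ) * ((ℓ : ℝ) - 1))⁻¹ * y A +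
        ((ℓ : ℝ) - 1)⁻¹ * ∑ H ∈ (indFaces X k (ℓ + 1)).filter (fun H => A ⊆ H), y H
    else 0

/-- The function `y^S_{ℓ-1}` encoding the matrix `Y^S`: it takes the value `ℓ` on the
`ℓ`-element subsets of `S` (the elements of `Ind_{ℓ-1}` inside `S`), the value `1` on the
`(ℓ+1)`-element subsets of `S`, and `0` elsewhere. -/
noncomputable def yS (S : Finset V) (ℓ : ℕ) : Finset V → ℝ := fun A =>
  if A ⊆ S ∧ A.card = ℓ then (ℓ : ℝ) else if A ⊆ S ∧ A.card = ℓ + 1 then 1 else 0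

/-! Subsets of the independent set `S` are independent, so the sets of `Ind` of size `|A| + 1`
that contain a set `A ⊆ S` and lie in `S` are the sets `insert x A` with `x ∈ S \ A`; there are
`|S| - |A|` of them. Hence at an `(ℓ-1)`-set `A ⊆ S` the map `τ` averages the value `ℓ` over
`|S| - ℓ + 1` sets, and at an `ℓ`-set `A ⊆ S` it adds `ℓ / (ℓ(ℓ-1))` to `(|S| - ℓ)/(ℓ-1)`; both
give `(|S| - ℓ + 1)/(ℓ - 1)` times `y^S_{ℓ-2}(A)`. Away from subsets of `S` everything vanishes. -/

section IndependentSets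

variable {V : Type} [DecidableEq V] {X : SC V} {k : ℕ} {S A : Finset V}

theorem SC.IsIndep.mono (hS : X.IsIndep k S) (hA : A ⊆ S) : X.IsIndep k A :=
  fun H hH hHA => hS H hH (hHA.trans hA)

variable [Fintype V]

theorem mem_indFaces {m : ℕ} : A ∈ indFaces X k m ↔ A.card = m ∧ X.IsIndep k A := by
  simp [indFaces]

theorem SC.IsIndep.filter_indFaces_subset (hS : X.IsIndep k S) (n : ℕ) :
    (indFaces X k n).filter (· ⊆ S) = S.powersetCard n := by
  ext F
  simp only [mem_filter, mem_indFaces, mem_powersetCard]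
  exact ⟨fun ⟨⟨hF, _⟩, hFS⟩ => ⟨hFS, hF⟩, fun ⟨hFS, hF⟩ => ⟨⟨hF, hS.mono hFS⟩, hFS⟩⟩

theorem sum_indFaces_superset_eq (hS : X.IsIndep k S) {n : ℕ} (hAn : A.card ≤ n) (c : ℝ)
    (f : Finset V → ℝ) (hf : ∀ F : Finset V, F.card = n → f F = if F ⊆ S then c else 0) :
    ∑ F ∈ (indFaces X k n).filter (A ⊆ ·), f F =
      if A ⊆ S then ((S.card - A.card).choose (n - A.card) : ℝ) * c else 0 := by
  have hsum : ∑ F ∈ (indFaces X k n).filter (A ⊆ ·), f F =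
      ∑ F ∈ (indFaces X k n).filter (A ⊆ ·), if F ⊆ S then c else 0 :=
    sum_congr rfl fun F hF => hf F (mem_indFaces.mp (mem_filter.mp hF).1).1
  rw [hsum, sum_ite, sum_const_zero, add_zero, sum_const, nsmul_eq_mul, filter_comm,
    hS.filter_indFaces_subset]
  split_ifs with hAS
  · rw [card_filter_powersetCard_subset A S n hAS hAn]
  · have hempty : (S.powersetCard n).filter (A ⊆ ·) = ∅ :=
      filter_eq_empty_iff.mpr fun F hF hAF => hAS (hAF.trans (mem_powersetCard.mp hF).1)
    rw [hempty, card_empty, Nat.cast_zero, zero_mul]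

end IndependentSets

section yS

variable {V : Type} [DecidableEq V] {S F : Finset V} {ℓ : ℕ}

theorem yS_of_card_eq (hF : F.card = ℓ) : yS S ℓ F = if F ⊆ S then (ℓ : ℝ) else 0 := by
  by_cases hFS : F ⊆ S <;> simp [yS, hFS, hF]

theorem yS_of_card_eq_succ (hF : F.card = ℓ + 1) : yS S ℓ F = if F ⊆ S then 1 else 0 := by
  by_cases hFS : F ⊆ S <;> simp [yS, hFS, hF]

theorem yS_eq_zero_of_card_ne (h₀ : F.card ≠ ℓ) (h₁ : F.card ≠ ℓ + 1) : yS S ℓ F = 0 := by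
  simp [yS, h₀, h₁]

end yS

theorem tau_yS_general
    {V : Type} [Fintype V] [DecidableEq V] [LinearOrder V] (X : SC V) (k ℓ : ℕ)
    (hl : 2 ≤ ℓ)
    (S : Finset V) (hS : X.IsIndep k S) (hcard : ℓ ≤ S.card) :
    tauMap X k ℓ (yS S ℓ) =
      fun A => (((S.card : ℝ) - (ℓ : ℝ) + 1) / ((ℓ : ℝ) - 1)) * yS S (ℓ - 1) A := by
  have hℓ : (2 : ℝ) ≤ ℓ := by exact_mod_cast hl
  have hℓ₁ : (ℓ : ℝ) - 1 ≠ 0 := by linarith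
  have hpred : ((ℓ - 1 : ℕ) : ℝ) = ℓ - 1 := by rw [Nat.cast_sub (by omega), Nat.cast_one]
  funext A
  simp only [tauMap]
  split_ifs with h₁ h₂
  · have hA := (mem_indFaces.mp h₁).1
    rw [sum_indFaces_superset_eq hS (by omega) ℓ _ fun F hF => yS_of_card_eq hF,
      yS_of_card_eq hA, hA, show ℓ - (ℓ - 1) = 1 by omega, Nat.choose_one_right,
      Nat.cast_sub (by omega), hpred]
    split_ifs
    · field_simp
      ring
    · simp
  · have hA := (mem_indFaces.mp h₂).1
    rw [sum_indFaces_superset_eq hS (by omega) 1 _ fun F hF => yS_of_card_eq_succ hF,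
      yS_of_card_eq hA, yS_of_card_eq_succ (by omega : A.card = ℓ - 1 + 1), hA,
      Nat.add_sub_cancel_left, Nat.choose_one_right, Nat.cast_sub hcard]
    split_ifs
    · field_simp
      ring
    · simp
  · by_cases hAS : A ⊆ S
    · have hAi := hS.mono hAS
      rw [yS_eq_zero_of_card_ne (fun h => h₁ (mem_indFaces.mpr ⟨h, hAi⟩))
        (fun h => h₂ (mem_indFaces.mpr ⟨by omega, hAi⟩)), mul_zero]
    · simp [yS, hAS]

/-- For a pure `k`-dimensional complex `X`, `k ≤ ℓ ≤ α(X)`, and an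
independent set `S` with `|S| ≥ ℓ`, the map `τ_{ℓ-1}` sends `y^S_{ℓ-1}` to
`((|S| − ℓ + 1)/(ℓ − 1)) · y^S_{ℓ-2}`. -/
theorem tau_yS
    {V : Type} [Fintype V] [DecidableEq V] [LinearOrder V] (X : SC V) (k ℓ : ℕ)
    (hk : 1 ≤ k) (hpure : X.Pure k) (hkl : k ≤ ℓ) (hl : 2 ≤ ℓ)
    (S : Finset V) (hS : X.IsIndep k S) (hcard : ℓ ≤ S.card) :
    tauMap X k ℓ (yS S ℓ) =
      fun A => (((S.card : ℝ) - (ℓ : ℝ) + 1) / ((ℓ : ℝ) - 1)) * yS S (ℓ - 1) A :=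
  tau_yS_general X k ℓ hl S hS hcard
end

section
/- Let X be a k-dimensional simplicial complex with complete (k-1)-skeleton. Then ϑ_k(X) ≤ k · max over (k-2)-faces K of X of ϑ(lk_X(K)), where ϑ denotes the Lovász theta number of a graph and lk_X(K) is the link graph of K. -/
/-!
Write `L↓_{k-1} = ∑_K ρ_K J_K ρ_K` over the `(k-1)`-sets `K`. For a feasible `Y` this splits
`⟨L↓_{k-1}, Y⟩` into the sums `⟨J, ρ_K Y ρ_K⟩`. Each `ρ_K Y ρ_K` is positive semidefinite, is
supported on the faces `K ∪ {v}`, which (the `(k-1)`-skeleton being complete) are the vertices of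
`lk_X(K)`, and vanishes on the edges of the link, because these are the pairs spanning a `k`-face
of `X`. After normalizing its trace it is feasible for the theta program of the link, so
`⟨J, ρ_K Y ρ_K⟩ ≤ ϑ(lk_X(K)) · tr(ρ_K Y ρ_K)`. Finally `∑_K tr(ρ_K Y ρ_K) = k · tr Y = k`, since
every `k`-set has exactly `k` subsets of size `k-1`.
-/

open Finset Matrix

variable {V : Type} [Fintype V] [DecidableEq V] [LinearOrder V]

namespace Matrix.PosSemidef

variable {W : Type} [Fintype W] {Z : Matrix W W ℝ}

lemma sum_apply_nonneg (hZ : Z.PosSemidef) : 0 ≤ ∑ v, ∑ w, Z v w := by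
  simpa [dotProduct, mulVec] using hZ.dotProduct_mulVec_nonneg (fun _ => 1)

lemma apply_add_apply_le (hZ : Z.PosSemidef) (v w : W) :
    Z v w + Z w v ≤ Z v v + Z w w := by
  classical
  have h := hZ.dotProduct_mulVec_nonneg (Pi.single v 1 - Pi.single w 1)
  simp only [star_trivial, mulVec_sub, mulVec_single, MulOpposite.op_one, one_smul,
    dotProduct_sub, sub_dotProduct, single_dotProduct, col_apply, one_mul] at h
  linarith

lemma sum_apply_le_card_mul_trace (hZ : Z.PosSemidef) :
    ∑ v, ∑ w, Z v w ≤ Fintype.card W * Z.trace := by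
  have h := sum_le_sum fun v (_ : v ∈ univ) =>
    sum_le_sum fun w (_ : w ∈ univ) => hZ.apply_add_apply_le v w
  simp only [sum_add_distrib, sum_const, card_univ, nsmul_eq_mul] at h
  rw [sum_comm (f := fun v w => Z w v)] at h
  simp only [trace, diag, ← mul_sum] at h ⊢
  linarith

end Matrix.PosSemidef

lemma thetaG_nonneg {W : Type} [Fintype W] (adj : W → W → Prop) : 0 ≤ thetaG adj :=
  Real.sSup_nonneg fun _ ⟨_, hZ, _, _, ht⟩ => ht ▸ hZ.sum_apply_nonneg

lemma sum_apply_le_thetaG_mul_trace {W : Type} [Fintype W] (adj : W → W → Prop)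
    {Z : Matrix W W ℝ} (hZ : Z.PosSemidef) (hadj : ∀ v w, adj v w → Z v w = 0) :
    ∑ v, ∑ w, Z v w ≤ thetaG adj * Z.trace := by
  rcases hZ.trace_nonneg.eq_or_lt with htr | htr
  · simp [(hZ.trace_eq_zero_iff).1 htr.symm]
  have hbdd : BddAbove {t | ∃ Z : Matrix W W ℝ, Z.PosSemidef ∧ Z.trace = 1 ∧
      (∀ v w, adj v w → Z v w = 0) ∧ t = ∑ v, ∑ w, Z v w} := by
    refine ⟨Fintype.card W, ?_⟩
    rintro _ ⟨Z, hZ, hZtr, -, rfl⟩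
    simpa [hZtr] using hZ.sum_apply_le_card_mul_trace
  have hnormalized : (Z.trace)⁻¹ * ∑ v, ∑ w, Z v w ≤ thetaG adj := by
    refine le_csSup hbdd ⟨(Z.trace)⁻¹ • Z, hZ.smul (inv_nonneg.2 htr.le), ?_, ?_, ?_⟩
    · rw [trace_smul, smul_eq_mul, inv_mul_cancel₀ htr.ne']
    · intro v w hvw
      simp [hadj v w hvw]
    · simp [mul_sum]
  rwa [inv_mul_le_iff₀ htr, mul_comm] at hnormalized

section Incidence

variable {V : Type} [DecidableEq V] [LinearOrder V]

lemma inc_eq_zero_of_not_subset {F K : Finset V} (h : ¬ K ⊆ F) : inc F K = 0 :=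
  if_neg fun hK => h hK.1

lemma inc_eq_zero_of_card_ne {F K : Finset V} (h : F.card ≠ K.card + 1) : inc F K = 0 :=
  if_neg fun hK => h hK.2

lemma inc_mul_self_s18 {F K : Finset V} (hKF : K ⊆ F) (hcard : F.card = K.card + 1) :
    inc F K * inc F K = 1 := by
  obtain ⟨v, hv⟩ : ∃ v, F \ K = {v} := by
    rw [← card_eq_one, card_sdiff_of_subset hKF, hcard, Nat.add_sub_cancel_left]
  rw [inc, if_pos ⟨hKF, hcard⟩, hv, sum_singleton, ← pow_add]
  exact Even.neg_one_pow ⟨_, rfl⟩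

lemma exists_eq_insert_of_inc_ne_zero {F K : Finset V} (h : inc F K ≠ 0) :
    ∃ v ∉ K, insert v K = F := by
  by_contra hF
  rw [exists_eq_insert_iff] at hF
  exact h (if_neg fun hK => hF ⟨hK.1, hK.2.symm⟩)

end Incidence

section CompleteLaplacian

variable {V : Type} [Fintype V] [DecidableEq V] [LinearOrder V] {k : ℕ}

lemma sum_inc_mul_inc_self {F : Finset V} (hk : 1 ≤ k) (hF : F.card = k) :
    ∑ K ∈ powersetCard (k - 1) univ, inc F K * inc F K = k := by
  have hzero : ∀ K ∈ powersetCard (k - 1) univ,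
      K ∉ powersetCard (k - 1) F → inc F K * inc F K = 0 := by
    intro K hK hKF
    rw [mem_powersetCard_univ] at hK
    rw [inc_eq_zero_of_not_subset fun h => hKF (mem_powersetCard.2 ⟨h, hK⟩), zero_mul]
  rw [← sum_subset (powersetCard_mono (subset_univ F)) hzero,
    sum_congr rfl fun K hK => inc_mul_self_s18 (mem_powersetCard.1 hK).1
      (by rw [(mem_powersetCard.1 hK).2]; omega),
    sum_const, card_powersetCard, hF, Nat.choose_symm_of_eq_add (by omega : k = k - 1 + 1)]
  simp

lemma sum_inc_mul_inc_of_ne_s18 {F F' : Finset V} (hF : F.card = k) (hF' : F'.card = k)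
    (hne : F ≠ F') :
    ∑ K ∈ powersetCard (k - 1) univ, inc F K * inc F' K = eps F F' := by
  refine sum_eq_single (F ∩ F') (fun K hK hKne => ?_) fun hnot => ?_
  · by_cases hKF : K ⊆ F
    · by_cases hKF' : K ⊆ F'
      · rw [mem_powersetCard_univ] at hK
        have hlt : K.card < (F ∩ F').card := card_lt_card
          (_root_.ssubset_iff_subset_ne.2 ⟨subset_inter hKF hKF', hKne⟩)
        have hFF' : F ⊆ F' := by
          rw [← eq_of_subset_of_card_le (inter_subset_left (s₁ := F) (s₂ := F'))
            (by omega)]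
          exact inter_subset_right
        exact absurd (eq_of_subset_of_card_le hFF' (by omega)) hne
      · rw [inc_eq_zero_of_not_subset hKF', mul_zero]
    · rw [inc_eq_zero_of_not_subset hKF, zero_mul]
  · rw [mem_powersetCard_univ] at hnot
    rw [inc_eq_zero_of_card_ne (by omega), zero_mul]

/-- `L↓_{k-1} = ∑_K ρ_K J_K ρ_K`, entrywise. -/
lemma sum_inc_mul_inc_eq_Lc (hk : 1 ≤ k) (F F' : KSet V k) :
    ∑ K ∈ powersetCard (k - 1) univ, inc F.1 K * inc F'.1 K = Lc V k F F' := by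
  unfold Lc
  split_ifs with h
  · rw [h]; exact sum_inc_mul_inc_self hk F'.2
  · exact sum_inc_mul_inc_of_ne_s18 F.2 F'.2 fun h' => h (Subtype.ext h')

end CompleteLaplacian

lemma Matrix.sum_sum_submatrix_of_support {ι κ R : Type*} [Fintype ι] [Fintype κ]
    [AddCommMonoid R] {M : Matrix κ κ R} {e : ι → κ} (he : Function.Injective e)
    (hM : ∀ a ∉ Set.range e, ∀ b, M a b = 0 ∧ M b a = 0) :
    ∑ i, ∑ j, M.submatrix e e i j = ∑ a, ∑ b, M a b := by
  refine Fintype.sum_of_injective e he _ _ (fun a ha => ?_) fun i => ?_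
  · exact sum_eq_zero fun b _ => (hM a ha b).1
  · exact Fintype.sum_of_injective e he _ _ (fun b hb => (hM b hb _).2) fun _ => rfl

lemma Matrix.trace_submatrix_of_support {ι κ R : Type*} [Fintype ι] [Fintype κ]
    [AddCommMonoid R] {M : Matrix κ κ R} {e : ι → κ} (he : Function.Injective e)
    (hM : ∀ a ∉ Set.range e, ∀ b, M a b = 0 ∧ M b a = 0) :
    (M.submatrix e e).trace = M.trace :=
  Fintype.sum_of_injective e he _ _ (fun a ha => (hM a ha a).1) fun _ => rfl

section Localization

variable {V : Type} [Fintype V] [DecidableEq V] [LinearOrder V] {k : ℕ}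

/-- `ρ_K Y ρ_K`, where `ρ_K` is the diagonal matrix with entries `[F:K]`. -/
def signedLocalization (K : Finset V) (Y : Matrix (KSet V k) (KSet V k) ℝ) :
    Matrix (KSet V k) (KSet V k) ℝ :=
  diagonal (fun F => inc F.1 K) * Y * diagonal (fun F => inc F.1 K)

lemma signedLocalization_apply (K : Finset V) (Y : Matrix (KSet V k) (KSet V k) ℝ)
    (F F' : KSet V k) : signedLocalization K Y F F' = inc F.1 K * Y F F' * inc F'.1 K := by
  simp [signedLocalization, diagonal_mul, mul_diagonal]

lemma Matrix.PosSemidef.signedLocalization {Y : Matrix (KSet V k) (KSet V k) ℝ}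
    (hY : Y.PosSemidef) (K : Finset V) : (signedLocalization K Y).PosSemidef := by
  simpa [_root_.signedLocalization] using
    hY.conjTranspose_mul_mul_same (diagonal fun F => inc F.1 K)

lemma trace_Lc_mul_eq_sum_signedLocalization (hk : 1 ≤ k)
    (Y : Matrix (KSet V k) (KSet V k) ℝ) :
    (Lc V k * Y).trace =
      ∑ K ∈ powersetCard (k - 1) univ, ∑ F, ∑ F', signedLocalization K Y F F' := by
  simp only [trace, Matrix.diag, mul_apply, ← sum_inc_mul_inc_eq_Lc hk, sum_mul,
    signedLocalization_apply]
  rw [sum_comm]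
  refine (sum_congr rfl fun F' _ => sum_comm).trans (sum_comm.trans ?_)
  exact sum_congr rfl fun K _ => sum_congr rfl fun F' _ =>
    sum_congr rfl fun F _ => by ring

lemma sum_trace_signedLocalization (hk : 1 ≤ k) (Y : Matrix (KSet V k) (KSet V k) ℝ) :
    ∑ K ∈ powersetCard (k - 1) univ, (signedLocalization K Y).trace = k * Y.trace := by
  simp only [trace, Matrix.diag, signedLocalization_apply, mul_sum]
  rw [sum_comm]
  refine sum_congr rfl fun F _ => ?_
  rw [← sum_inc_mul_inc_self hk F.2, sum_mul]
  exact sum_congr rfl fun K _ => by ring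

end Localization

section Link

variable {V : Type} [Fintype V] [DecidableEq V] {k : ℕ}

def linkAdj (X : SC V) (k : ℕ) (K : Finset V) (v w : {v : V // insert v K ∈ X.dfaces k}) :
    Prop :=
  v ≠ w ∧ insert v.1 (insert w.1 K) ∈ X.dfaces (k + 1)

def linkFace (X : SC V) (K : Finset V) (v : {v : V // insert v K ∈ X.dfaces k}) : KSet V k :=
  ⟨insert v.1 K, (mem_filter.1 v.2).2⟩

lemma linkFace_injective (X : SC V) {K : Finset V} (hK : K.card + 1 = k) :
    Function.Injective (linkFace (k := k) X K) := by
  intro v w hvw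
  have hv : v.1 ∉ K := fun hvK => by
    have := (linkFace X K v).2
    simp only [linkFace, insert_eq_of_mem hvK] at this
    omega
  exact Subtype.ext ((insert_inj hv).1 (congrArg Subtype.val hvw))

variable [LinearOrder V]

lemma mem_range_linkFace_of_inc_ne_zero (X : SC V)
    (hskel : ∀ F : Finset V, F.card = k → F ∈ X.faces) {K : Finset V} {F : KSet V k}
    (hF : inc F.1 K ≠ 0) : F ∈ Set.range (linkFace X K) := by
  obtain ⟨v, -, hvF⟩ := exists_eq_insert_of_inc_ne_zero hF
  have hv : insert v K ∈ X.dfaces k := mem_filter.2 ⟨hskel _ (hvF ▸ F.2), hvF ▸ F.2⟩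
  exact ⟨⟨v, hv⟩, Subtype.ext hvF⟩

lemma sum_signedLocalization_le_thetaG_mul_trace (X : SC V) {K : Finset V}
    (hK : K.card + 1 = k) (hskel : ∀ F : Finset V, F.card = k → F ∈ X.faces)
    {Y : Matrix (KSet V k) (KSet V k) ℝ} (hY : Y.PosSemidef)
    (hface : ∀ F F' : KSet V k, F.1 ∪ F'.1 ∈ X.dfaces (k + 1) → Y F F' = 0) :
    ∑ F, ∑ F', signedLocalization K Y F F' ≤
      thetaG (linkAdj X k K) * (signedLocalization K Y).trace := by
  have hsupp : ∀ F ∉ Set.range (linkFace X K), ∀ F',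
      signedLocalization K Y F F' = 0 ∧ signedLocalization K Y F' F = 0 := by
    intro F hF F'
    have hinc : inc F.1 K = 0 := by
      by_contra h
      exact hF (mem_range_linkFace_of_inc_ne_zero X hskel h)
    simp [signedLocalization_apply, hinc]
  rw [← sum_sum_submatrix_of_support (linkFace_injective X hK) hsupp,
    ← trace_submatrix_of_support (linkFace_injective X hK) hsupp]
  refine sum_apply_le_thetaG_mul_trace _ ((hY.signedLocalization K).submatrix _) ?_
  rintro v w ⟨-, hvw⟩
  have hunion : (linkFace X K v).1 ∪ (linkFace X K w).1 = insert v.1 (insert w.1 K) := by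
    ext x
    simp only [linkFace, mem_union, mem_insert]
    tauto
  simp [signedLocalization_apply, hface _ _ (hunion ▸ hvw)]

end Link

theorem theta_le_link_bound_general
    {V : Type} [Fintype V] [DecidableEq V] [LinearOrder V] (X : SC V) (k : ℕ)
    (hk : 2 ≤ k) (hkn : k ≤ Fintype.card V)
    (hskel : ∀ F : Finset V, F.card ≤ k → F ∈ X.faces)
    (b : ℝ)
    (hb : ∀ K ∈ X.dfaces (k - 1),
      thetaG (fun v w : {v : V // insert v K ∈ X.dfaces k} =>
        v ≠ w ∧ insert v.1 (insert w.1 K) ∈ X.dfaces (k + 1)) ≤ b) :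
    theta X k ≤ (k : ℝ) * b := by
  have hridge : ∀ K ∈ powersetCard (k - 1) univ, K ∈ X.dfaces (k - 1) :=
    fun K hK => mem_filter.2
      ⟨hskel K (by rw [mem_powersetCard_univ.1 hK]; omega), mem_powersetCard_univ.1 hK⟩
  obtain ⟨K₀, hK₀⟩ : (powersetCard (k - 1) (univ : Finset V)).Nonempty :=
    powersetCard_nonempty.2 (by rw [card_univ]; omega)
  have hb0 : 0 ≤ b := (thetaG_nonneg _).trans (hb K₀ (hridge K₀ hK₀))
  refine Real.sSup_le ?_ (by positivity)
  rintro _ ⟨Y, ⟨hY, htr, hface, -, -⟩, rfl⟩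
  have hlink : ∀ K ∈ powersetCard (k - 1) univ,
      ∑ F, ∑ F', signedLocalization K Y F F' ≤ b * (signedLocalization K Y).trace :=
    fun K hK => (sum_signedLocalization_le_thetaG_mul_trace X
      (by rw [mem_powersetCard_univ.1 hK]; omega) (fun F hF => hskel F hF.le) hY hface).trans
      (mul_le_mul_of_nonneg_right (hb K (hridge K hK)) (hY.signedLocalization K).trace_nonneg)
  calc (Lc V k * Y).trace
      = ∑ K ∈ powersetCard (k - 1) univ, ∑ F, ∑ F', signedLocalization K Y F F' :=
        trace_Lc_mul_eq_sum_signedLocalization (by omega) Y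
    _ ≤ ∑ K ∈ powersetCard (k - 1) univ, b * (signedLocalization K Y).trace :=
        sum_le_sum hlink
    _ = k * b := by
        rw [← mul_sum, sum_trace_signedLocalization (by omega), htr]
        ring

/-- For a `k`-dimensional simplicial complex `X` with complete
`(k-1)`-skeleton, `ϑ_k(X) ≤ k · max_K ϑ(lk_X(K))`, the maximum being over all
`(k-2)`-dimensional faces `K` of `X`, where `lk_X(K)` is the link graph of `K` (vertices
`v` with `K ∪ {v} ∈ X_{k-1}`, edges `{v,w}` with `K ∪ {v,w} ∈ X_k`) and `ϑ` is the
Lovász theta number of a graph. (Stated as: `ϑ_k(X) ≤ k·b` for every upper bound `b` of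
the theta numbers of the links.) -/
theorem theta_le_link_bound
    {V : Type} [Fintype V] [DecidableEq V] [LinearOrder V] (X : SC V) (k : ℕ)
    (hk : 2 ≤ k) (hkn : k ≤ Fintype.card V)
    (hdim : ∀ F ∈ X.faces, F.card ≤ k + 1)
    (hskel : ∀ F : Finset V, F.card ≤ k → F ∈ X.faces)
    (b : ℝ)
    (hb : ∀ K ∈ X.dfaces (k - 1),
      thetaG (fun v w : {v : V // insert v K ∈ X.dfaces k} =>
        v ≠ w ∧ insert v.1 (insert w.1 K) ∈ X.dfaces (k + 1)) ≤ b) :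
    theta X k ≤ (k : ℝ) * b :=
  theta_le_link_bound_general X k hk hkn hskel b hb
end
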